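/- arXiv:1912.04001 — 8 statements merged into one kernel-verified Lean document; each statement's English description precedes it below -/
import Mathlib

section
/- Given an adjoint triple of functors F ⊣ G ⊣ H (where F, H : C ⥤ D and G : D ⥤ C), the functor F is fully faithful if and only if H is fully faithful. -/
open CategoryTheory

theorem CategoryTheory.Functor.full_and_faithful_iff_nonempty_fullyFaithful
    {C : Type*} {D : Type*} [Category C] [Category D] (F : C ⥤ D) :
    (F.Full ∧ F.Faithful) ↔ Nonempty F.FullyFaithful :=
  ⟨fun ⟨_, _⟩ ↦ ⟨.ofFullyFaithful F⟩, fun ⟨hF⟩ ↦ ⟨hF.full, hF.faithful⟩⟩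

/-- Given an adjoint triple `F ⊣ G ⊣ H` (where `F H : C ⥤ D`, `G : D ⥤ C`),
the functor `F` is fully faithful if and only if `H` is fully faithful. -/
theorem adjoint_triple_full_faithful_iff
    {C : Type*} {D : Type*} [Category C] [Category D]
    (F H : C ⥤ D) (G : D ⥤ C) (adj₁ : F ⊣ G) (adj₂ : G ⊣ H) :
    (F.Full ∧ F.Faithful) ↔ (H.Full ∧ H.Faithful) := by
  rw [F.full_and_faithful_iff_nonempty_fullyFaithful,
    H.full_and_faithful_iff_nonempty_fullyFaithful]
  exact (Adjunction.Triple.mk adj₁ adj₂).fullyFaithfulEquiv.nonempty_congr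
end

section
/- In a recollement of abelian categories (B, A, C) with functors i : B ⥤ A, r : A ⥤ C and adjoint triples i_L ⊣ i ⊣ i_R, r_L ⊣ r ⊣ r_R, for every object A of A there is an exact sequence 0 → i(B) → r_L(r(A)) → A → i(i_L(A)) → 0 for some B in B, where the middle maps are the counit of r_L ⊣ r and the unit of i_L ⊣ i. -/
open CategoryTheory Limits

/-- A recollement of an abelian category `A` by abelian categories `B` and `C`:
additive functors `i : B ⥤ A`, `r : A ⥤ C` with adjoint triples `i_L ⊣ i ⊣ i_R` and
`r_L ⊣ r ⊣ r_R`, such that `i`, `r_L`, `r_R` are fully faithful and `Im i = Ker r`. -/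
structure AbelianRecollement (B A C : Type*) [Category B] [Category A] [Category C]
    [Preadditive B] [Preadditive A] [Preadditive C] [HasZeroObject A] [HasZeroObject C] where
  i : B ⥤ A
  r : A ⥤ C
  iL : A ⥤ B
  iR : A ⥤ B
  rL : C ⥤ A
  rR : C ⥤ A
  i_additive : i.Additive
  r_additive : r.Additive
  iL_additive : iL.Additive
  iR_additive : iR.Additive
  rL_additive : rL.Additive
  rR_additive : rR.Additive
  adj_iL : iL ⊣ i
  adj_iR : i ⊣ iR
  adj_rL : rL ⊣ r
  adj_rR : r ⊣ rR
  i_full : i.Full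
  i_faithful : i.Faithful
  rL_full : rL.Full
  rL_faithful : rL.Faithful
  rR_full : rR.Full
  rR_faithful : rR.Faithful
  im_eq_ker : ∀ X : A, i.essImage X ↔ IsZero (r.obj X)

namespace AbelianRecollementAux

variable {A : Type*} [Category A] [Abelian A]

lemma isZero_kernel_of_mono {X Y : A} (f : X ⟶ Y) [Mono f] : IsZero (kernel f) := by
  rw [IsZero.iff_id_eq_zero]
  have hι : kernel.ι f = 0 := zero_of_comp_mono f (kernel.condition f)
  rw [← cancel_mono (kernel.ι f), Category.id_comp, zero_comp, hι]

lemma isZero_cokernel_of_epi {X Y : A} (f : X ⟶ Y) [Epi f] : IsZero (cokernel f) := by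
  rw [IsZero.iff_id_eq_zero]
  have hπ : cokernel.π f = 0 := zero_of_epi_comp f (cokernel.condition f)
  rw [← cancel_epi (cokernel.π f), Category.comp_id, comp_zero, hπ]

lemma isZero_cokernel_of_isZero {X Y : A} (f : X ⟶ Y) (h : IsZero Y) :
    IsZero (cokernel f) := by
  rw [IsZero.iff_id_eq_zero]
  have hπ : cokernel.π f = 0 := h.eq_of_src _ _
  rw [← cancel_epi (cokernel.π f), Category.comp_id, comp_zero, hπ]

end AbelianRecollementAux

/-- In a recollement of abelian categories `(B, A, C)`, for every object `A₀` of `A`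
there is an exact sequence `0 → i(B₀) → r_L(r(A₀)) → A₀ → i(i_L(A₀)) → 0` for some
`B₀ ∈ B`, where the middle maps are the counit of `r_L ⊣ r` and the unit of `i_L ⊣ i`. -/
theorem abelianRecollement_exact_sequence
    {B A C : Type*} [Category B] [Category A] [Category C]
    [Abelian B] [Abelian A] [Abelian C]
    (R : AbelianRecollement B A C) (A₀ : A) :
    ∃ (B₀ : B) (f : R.i.obj B₀ ⟶ R.rL.obj (R.r.obj A₀))
      (w₁ : f ≫ R.adj_rL.counit.app A₀ = 0)
      (w₂ : R.adj_rL.counit.app A₀ ≫ R.adj_iL.unit.app A₀ = 0),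
      Mono f ∧
      (ShortComplex.mk f (R.adj_rL.counit.app A₀) w₁).Exact ∧
      (ShortComplex.mk (R.adj_rL.counit.app A₀) (R.adj_iL.unit.app A₀) w₂).Exact ∧
      Epi (R.adj_iL.unit.app A₀) := by
  haveI := R.i_additive
  haveI := R.r_additive
  haveI := R.iL_additive
  haveI := R.rL_additive
  haveI := R.i_full
  haveI := R.i_faithful
  haveI := R.rL_full
  haveI := R.rL_faithful
  haveI : PreservesColimitsOfSize.{0,0} R.iL := R.adj_iL.leftAdjoint_preservesColimits
  haveI : PreservesColimitsOfSize.{0,0} R.r := R.adj_rR.leftAdjoint_preservesColimits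
  haveI : PreservesLimitsOfSize.{0,0} R.r := R.adj_rL.rightAdjoint_preservesLimits
  set ε := R.adj_rL.counit.app A₀ with hε
  set η := R.adj_iL.unit.app A₀ with hη
  -- r sends the image of i to zero
  have hrizero : ∀ X : B, IsZero (R.r.obj (R.i.obj X)) := fun X =>
    (R.im_eq_ker _).1 ⟨X, ⟨Iso.refl _⟩⟩
  -- r(ε) is an isomorphism
  haveI hrε : IsIso (R.r.map ε) := inferInstance
  -- the composite ε ≫ η vanishes
  have hzL : IsZero (R.iL.obj (R.rL.obj (R.r.obj A₀))) := by
    rw [IsZero.iff_id_eq_zero]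
    apply (R.adj_iL.homEquiv _ _).injective
    apply (R.adj_rL.homEquiv _ _).injective
    exact (hrizero _).eq_of_tgt _ _
  have hiLε : R.iL.map ε = 0 := hzL.eq_of_src _ _
  have w₂ : ε ≫ η = 0 := by
    have hnat := R.adj_iL.unit.naturality ε
    simp only [Functor.id_map, Functor.comp_map] at hnat
    show ε ≫ R.adj_iL.unit.app ((𝟭 A).obj A₀) = 0
    rw [hnat, hiLε, Functor.map_zero, comp_zero]
  -- the kernel of ε lies in the image of i
  have hkz : IsZero (R.r.obj (kernel ε)) :=
    (AbelianRecollementAux.isZero_kernel_of_mono (R.r.map ε)).of_iso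
      (PreservesKernel.iso R.r ε)
  obtain ⟨B₀, ⟨e⟩⟩ := (R.im_eq_ker _).2 hkz
  refine ⟨B₀, e.hom ≫ kernel.ι ε, by simp, w₂, ?_, ?_, ?_, ?_⟩
  · exact mono_comp _ _
  · -- exactness at rL(r(A₀))
    exact ShortComplex.exact_of_f_is_kernel _ (kernel.isoKernel ε (e.hom ≫ kernel.ι ε) e rfl)
  · -- exactness at A₀
    haveI : IsIso (R.iL.map η) := inferInstance
    -- η is epi
    have hc1 : IsZero (R.r.obj (cokernel η)) :=
      (AbelianRecollementAux.isZero_cokernel_of_isZero (R.r.map η) (hrizero _)).of_iso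
        (PreservesCokernel.iso R.r η)
    obtain ⟨Y, ⟨eY⟩⟩ := (R.im_eq_ker _).2 hc1
    have hc2 : IsZero (R.iL.obj (cokernel η)) :=
      (AbelianRecollementAux.isZero_cokernel_of_epi (R.iL.map η)).of_iso
        (PreservesCokernel.iso R.iL η)
    have hY : IsZero Y :=
      ((hc2.of_iso (R.iL.mapIso eY)).of_iso (asIso (R.adj_iL.counit.app Y)).symm)
    have hcokη : IsZero (cokernel η) := (R.i.map_isZero hY).of_iso eY.symm
    haveI hηepi : Epi η := Preadditive.epi_of_isZero_cokernel η hcokη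
    -- the comparison map t : cokernel ε ⟶ i(iL A₀)
    set t := cokernel.desc ε η w₂ with ht
    haveI : Epi t := by
      have : Epi (cokernel.π ε ≫ t) := by rw [ht, cokernel.π_desc]; exact hηepi
      exact epi_of_epi (cokernel.π ε) t
    haveI : Mono t := by
      have hcok : IsZero (R.r.obj (cokernel ε)) :=
        (AbelianRecollementAux.isZero_cokernel_of_epi (R.r.map ε)).of_iso
          (PreservesCokernel.iso R.r ε)
      obtain ⟨Z, ⟨eZ⟩⟩ := (R.im_eq_ker _).2 hcok
      set u := (R.adj_iL.homEquiv A₀ Z).symm (cokernel.π ε ≫ eZ.inv) with hu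
      have hu2 : η ≫ R.i.map u = cokernel.π ε ≫ eZ.inv := by
        have h3 := (R.adj_iL.homEquiv A₀ Z).apply_symm_apply (cokernel.π ε ≫ eZ.inv)
        rw [Adjunction.homEquiv_unit] at h3
        exact h3
      have h4 : t ≫ R.i.map u = eZ.inv := by
        rw [← cancel_epi (cokernel.π ε), ← Category.assoc, ht, cokernel.π_desc, hu2]
      have : Mono (t ≫ R.i.map u) := by rw [h4]; infer_instance
      exact mono_of_mono t (R.i.map u)
    haveI : IsIso t := isIso_of_mono_of_epi t
    exact ShortComplex.exact_of_g_is_cokernel _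
      (cokernel.cokernelIso ε η (asIso t) (by rw [asIso_hom, ht, cokernel.π_desc]))
  · -- η is epi
    haveI : IsIso (R.iL.map η) := inferInstance
    have hc1 : IsZero (R.r.obj (cokernel η)) :=
      (AbelianRecollementAux.isZero_cokernel_of_isZero (R.r.map η) (hrizero _)).of_iso
        (PreservesCokernel.iso R.r η)
    obtain ⟨Y, ⟨eY⟩⟩ := (R.im_eq_ker _).2 hc1
    have hc2 : IsZero (R.iL.obj (cokernel η)) :=
      (AbelianRecollementAux.isZero_cokernel_of_epi (R.iL.map η)).of_iso
        (PreservesCokernel.iso R.iL η)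
    have hY : IsZero Y :=
      ((hc2.of_iso (R.iL.mapIso eY)).of_iso (asIso (R.adj_iL.counit.app Y)).symm)
    have hcokη : IsZero (cokernel η) := (R.i.map_isZero hY).of_iso eY.symm
    exact Preadditive.epi_of_isZero_cokernel η hcokη
end

section
/- In a recollement of abelian categories (B, A, C), the essential image of i : B ⥤ A is a Serre subcategory of A, and r : A ⥤ C induces an equivalence C ≃ A / B. -/
open CategoryTheory Limits

/-- In a recollement of abelian categories `(B, A, C)`, the essential image of
`i : B ⥤ A` is a Serre subcategory of `A`, and `r : A ⥤ C` exhibits `C` as the Serre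
quotient `A / B`: it is a localization of `A` at the class of morphisms whose kernel
and cokernel lie in the essential image of `i`. -/
theorem abelianRecollement_essImage_serre_and_quotient
    {B A C : Type*} [Category B] [Category A] [Category C]
    [Abelian B] [Abelian A] [Abelian C]
    (R : AbelianRecollement B A C) :
    (∀ (S : ShortComplex A), S.ShortExact →
      (R.i.essImage S.X₂ ↔ (R.i.essImage S.X₁ ∧ R.i.essImage S.X₃))) ∧
    R.r.IsLocalization
      (fun _ _ f => R.i.essImage (kernel f) ∧ R.i.essImage (cokernel f)) := by

  have hadd := R.r_additive
  have hzero : R.r.PreservesZeroMorphisms := inferInstance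
  have hlim : PreservesLimitsOfSize.{0,0} R.r := R.adj_rL.rightAdjoint_preservesLimits
  have hcolim : PreservesColimitsOfSize.{0,0} R.r := R.adj_rR.leftAdjoint_preservesColimits
  have hflim : PreservesFiniteLimits R.r := inferInstance
  have hfcolim : PreservesFiniteColimits R.r := inferInstance
  constructor
  · intro S hS
    have hmap : (S.map R.r).ShortExact := hS.map_of_exact R.r
    haveI : Mono (R.r.map S.f) := hmap.mono_f
    haveI : Epi (R.r.map S.g) := hmap.epi_g
    rw [R.im_eq_ker, R.im_eq_ker, R.im_eq_ker]
    constructor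
    · intro h2
      exact ⟨IsZero.of_mono (R.r.map S.f) h2, IsZero.of_epi (R.r.map S.g) h2⟩
    · rintro ⟨h1, h3⟩
      exact hmap.exact.isZero_X₂ (h1.eq_zero_of_src _) (h3.eq_zero_of_tgt _)
  · have hfull := R.rR_full
    have hfaithful := R.rR_faithful
    have hloc := R.adj_rR.isLocalization
    have heq : (fun _ _ f => R.i.essImage (kernel f) ∧ R.i.essImage (cokernel f) :
        MorphismProperty A) = (MorphismProperty.isomorphisms C).inverseImage R.r := by
      ext X Y f
      rw [R.im_eq_ker, R.im_eq_ker]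
      have e1 : R.r.obj (kernel f) ≅ kernel (R.r.map f) := PreservesKernel.iso R.r f
      have e2 : R.r.obj (cokernel f) ≅ cokernel (R.r.map f) := PreservesCokernel.iso R.r f
      constructor
      · rintro ⟨h1, h2⟩
        have hm : Mono (R.r.map f) :=
          Preadditive.mono_of_isZero_kernel _ (h1.of_iso e1.symm)
        have he : Epi (R.r.map f) :=
          Preadditive.epi_of_isZero_cokernel _ (h2.of_iso e2.symm)
        exact isIso_of_mono_of_epi _
      · intro h
        have : IsIso (R.r.map f) := h
        have hm : Mono (R.r.map f) := inferInstance
        have he : Epi (R.r.map f) := inferInstance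
        exact ⟨((isZero_zero C).of_iso (kernel.ofMono (R.r.map f))).of_iso e1,
          ((isZero_zero C).of_iso (cokernel.ofEpi (R.r.map f))).of_iso e2⟩
    rw [heq]
    exact hloc
end

section
/- Let A be an abelian category, S ⊆ A a Serre subcategory, i : S ⥤ A the inclusion, and suppose the quotient functor r : A ⥤ A/S has a fully faithful left adjoint r_L. Then i has a left adjoint i_L given by i_L(X) = Coker(ε_X : r_L(r(X)) → X), where ε is the counit of r_L ⊣ r. -/
/-!
By the triangle identity `r(ε_X)` is a split epimorphism, so `r`, being right exact, kills
`Coker ε_X`. Conversely, if `r Y = 0` then every `g : X ⟶ Y` kills `ε_X`, since its adjunct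
`r X ⟶ r Y` is zero; hence `g` factors uniquely through `Coker ε_X`, which is therefore the
reflection of `X` into the objects killed by `r`.
-/

open CategoryTheory Limits

namespace CategoryTheory

namespace Adjunction

variable {C D : Type*} [Category C] [Category D] {F : C ⥤ D} {G : D ⥤ C} (adj : F ⊣ G)

instance isSplitEpi_map_counit_app (X : D) : IsSplitEpi (G.map (adj.counit.app X)) :=
  ⟨⟨⟨adj.unit.app (G.obj X), adj.right_triangle_components X⟩⟩⟩

lemma counit_app_comp_eq_zero [HasZeroMorphisms D] {X Y : D} (hY : IsZero (G.obj Y))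
    (g : X ⟶ Y) : adj.counit.app X ≫ g = 0 :=
  (adj.homEquiv _ _).injective (hY.eq_of_tgt _ _)

lemma isZero_map_cokernel_counit_app [HasZeroMorphisms C] [HasZeroMorphisms D]
    [G.PreservesZeroMorphisms] (X : D) [HasCokernel (adj.counit.app X)]
    [HasCokernel (G.map (adj.counit.app X))]
    [PreservesColimit (parallelPair (adj.counit.app X) 0) G] :
    IsZero (G.obj (cokernel (adj.counit.app X))) :=
  (isZero_cokernel_of_epi _).of_iso (PreservesCokernel.iso G _)

end Adjunction

namespace ObjectProperty

variable {C : Type*} [Category C] [HasZeroMorphisms C] (P : ObjectProperty C)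
  {K : C → C} (f : ∀ X, K X ⟶ X) [∀ X, HasCokernel (f X)]
  (hP : ∀ X, P (cokernel (f X))) (hf : ∀ X (Y : P.FullSubcategory) (g : X ⟶ Y.obj), f X ≫ g = 0)

noncomputable def cokernelHomEquiv (X : C) (Y : P.FullSubcategory) :
    ((⟨cokernel (f X), hP X⟩ : P.FullSubcategory) ⟶ Y) ≃ (X ⟶ P.ι.obj Y) where
  toFun g := cokernel.π _ ≫ g.hom
  invFun g := homMk (cokernel.desc _ g (hf X Y g))
  left_inv g := by ext; simp
  right_inv g := by simp

noncomputable def cokernelReflector : C ⥤ P.FullSubcategory :=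
  Adjunction.leftAdjointOfEquiv (cokernelHomEquiv P f hP hf) fun _ _ _ _ _ => by
    simp [cokernelHomEquiv]

noncomputable def cokernelReflectorAdjunction : cokernelReflector P f hP hf ⊣ P.ι :=
  Adjunction.adjunctionOfEquivLeft _ _

end ObjectProperty

end CategoryTheory

theorem serre_inclusion_has_left_adjoint_cokernel_general
    {A Q : Type*} [Category A] [Category Q] [Abelian A] [Abelian Q]
    (r : A ⥤ Q) (rL : Q ⥤ A) (adj : rL ⊣ r)
    [PreservesFiniteColimits r] :
    ∃ (iL : A ⥤ ObjectProperty.FullSubcategory (fun X : A => IsZero (r.obj X)))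
      (_ : iL ⊣ ObjectProperty.ι (fun X : A => IsZero (r.obj X))),
      ∀ X : A,
        Nonempty
          ((ObjectProperty.ι (fun X : A => IsZero (r.obj X))).obj (iL.obj X) ≅
            cokernel (adj.counit.app X)) := by
  -- provides `r.PreservesZeroMorphisms`
  have : r.IsRightAdjoint := adj.isRightAdjoint
  have hP (X : A) : IsZero (r.obj (cokernel (adj.counit.app X))) :=
    adj.isZero_map_cokernel_counit_app X
  exact ⟨_, ObjectProperty.cokernelReflectorAdjunction _ _ hP
    (fun _ Y g => adj.counit_app_comp_eq_zero Y.property g), fun _ => ⟨Iso.refl _⟩⟩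

/-- Let `A` be an abelian category, `S ⊆ A` the Serre subcategory of objects killed by
the exact quotient functor `r : A ⥤ Q`, `i : S ⥤ A` the inclusion, and suppose `r` has a
fully faithful left adjoint `r_L`. Then `i` has a left adjoint `i_L` given by
`i_L(X) = Coker(ε_X : r_L(r(X)) → X)`, where `ε` is the counit of `r_L ⊣ r`. -/
theorem serre_inclusion_has_left_adjoint_cokernel
    {A Q : Type*} [Category A] [Category Q] [Abelian A] [Abelian Q]
    (r : A ⥤ Q) (rL : Q ⥤ A) (adj : rL ⊣ r)
    [r.Additive] [PreservesFiniteLimits r] [PreservesFiniteColimits r] [r.EssSurj]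
    [rL.Full] [rL.Faithful] :
    ∃ (iL : A ⥤ ObjectProperty.FullSubcategory (fun X : A => IsZero (r.obj X)))
      (_ : iL ⊣ ObjectProperty.ι (fun X : A => IsZero (r.obj X))),
      ∀ X : A,
        Nonempty
          ((ObjectProperty.ι (fun X : A => IsZero (r.obj X))).obj (iL.obj X) ≅
            cokernel (adj.counit.app X)) :=
  serre_inclusion_has_left_adjoint_cokernel_general r rL adj
end

section
/- Let D be a Grothendieck category and Q, S two localizing Serre subcategories of D such that S satisfies the Voevodsky property with respect to Q (i.e., the Q-localization of every object of S again lies in S). Then the full subcategory S^Q = { X_Q | X ∈ S } of Q-local objects is a localizing Serre subcategory of the quotient category D/Q. -/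
open CategoryTheory Limits

universe v u u'

variable {D : Type u} [Category.{v} D]

/-- A localizing (Serre) subcategory of an abelian category with coproducts: a class of
objects closed under isomorphisms, subobjects, quotient objects, extensions and
arbitrary direct sums. -/
def IsLocalizingSubcategory [Abelian D] [HasCoproducts.{v} D] (P : Set D) : Prop :=
  (∀ {X Y : D}, (X ≅ Y) → X ∈ P → Y ∈ P) ∧
  (∀ {X Y : D} (f : X ⟶ Y), Mono f → Y ∈ P → X ∈ P) ∧
  (∀ {X Y : D} (f : X ⟶ Y), Epi f → X ∈ P → Y ∈ P) ∧
  (∀ S : ShortComplex D, S.ShortExact → S.X₁ ∈ P → S.X₃ ∈ P → S.X₂ ∈ P) ∧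
  (∀ (ι : Type v) (f : ι → D), (∀ i, f i ∈ P) → (∐ f) ∈ P)

/-!
Since the section functor `R` is fully faithful, `L (R Y) ≅ Y`; together with the
Voevodsky property this identifies `S^Q` with `R⁻¹(S)`. Closure of `R⁻¹(S)` under
subobjects and extensions follows from left exactness of `R`. For a quotient `X ↠ Y`,
where `R` need not preserve the epimorphism, one passes to the image `I` of `R X → R Y`:
exactness of `L` gives `L I ≅ Y`, so `R Y ≅ R (L I) ∈ S`. Similarly
`∐ Yᵢ ≅ L (∐ R Yᵢ)` because `L` preserves coproducts.
-/

namespace IsLocalizingSubcategory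

variable [Abelian D] [HasCoproducts.{v} D] {P : Set D}

lemma of_iso (hP : IsLocalizingSubcategory P) {X Y : D} (e : X ≅ Y) (hX : X ∈ P) : Y ∈ P :=
  hP.1 e hX

lemma of_mono (hP : IsLocalizingSubcategory P) {X Y : D} (f : X ⟶ Y) [Mono f] (hY : Y ∈ P) :
    X ∈ P :=
  hP.2.1 f ‹_› hY

lemma of_epi (hP : IsLocalizingSubcategory P) {X Y : D} (f : X ⟶ Y) [Epi f] (hX : X ∈ P) :
    Y ∈ P :=
  hP.2.2.1 f ‹_› hX

lemma of_shortExact (hP : IsLocalizingSubcategory P) {T : ShortComplex D} (hT : T.ShortExact)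
    (h₁ : T.X₁ ∈ P) (h₃ : T.X₃ ∈ P) : T.X₂ ∈ P :=
  hP.2.2.2.1 T hT h₁ h₃

lemma sigma_mem (hP : IsLocalizingSubcategory P) {ι : Type v} (f : ι → D)
    (hf : ∀ i, f i ∈ P) : ∐ f ∈ P :=
  hP.2.2.2.2 ι f hf

lemma of_exact_of_mono (hP : IsLocalizingSubcategory P) {T : ShortComplex D} (hT : T.Exact)
    [Mono T.f] (h₁ : T.X₁ ∈ P) (h₃ : T.X₃ ∈ P) : T.X₂ ∈ P := by
  have := hT.mono_cokernelDesc
  have hcoker : cokernel T.f ∈ P := hP.of_mono (cokernel.desc T.f T.g T.zero) h₃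
  let E : ShortComplex D := .mk T.f (cokernel.π T.f) (cokernel.condition _)
  have hE : E.ShortExact := .mk' (E.exact_of_g_is_cokernel (cokernelIsCokernel T.f))
    (inferInstanceAs (Mono T.f)) (inferInstanceAs (Epi (cokernel.π T.f)))
  exact hP.of_shortExact (T := E) hE h₁ hcoker

end IsLocalizingSubcategory

namespace CategoryTheory.Adjunction

variable {C : Type u'} [Category.{v} C] [Abelian D] {L : D ⥤ C} {R : C ⥤ D}
  [R.Full] [R.Faithful]

lemma exists_mem_left_obj_iso_iff [HasCoproducts.{v} D] (adj : L ⊣ R) {S : Set D}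
    (hS : IsLocalizingSubcategory S) (hV : ∀ X ∈ S, R.obj (L.obj X) ∈ S) (Y : C) :
    (∃ X ∈ S, Nonempty (L.obj X ≅ Y)) ↔ R.obj Y ∈ S := by
  constructor
  · rintro ⟨X, hX, ⟨e⟩⟩
    exact hS.of_iso (R.mapIso e) (hV X hX)
  · intro hY
    exact ⟨R.obj Y, hY, ⟨asIso (adj.counit.app Y)⟩⟩

lemma isIso_map_imageι_comp_counit [Abelian C] [PreservesFiniteLimits L] (adj : L ⊣ R) {X Y : C}
    (f : X ⟶ Y) [Epi f] :
    IsIso (L.map (Abelian.image.ι (R.map f)) ≫ adj.counit.app Y) := by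
  have fac : L.map (Abelian.factorThruImage (R.map f)) ≫
      (L.map (Abelian.image.ι (R.map f)) ≫ adj.counit.app Y) = adj.counit.app X ≫ f := by
    rw [← Category.assoc, ← L.map_comp, Abelian.image.fac]
    exact adj.counit.naturality f
  have : L.IsLeftAdjoint := adj.isLeftAdjoint
  have : Mono (L.map (Abelian.image.ι (R.map f))) := L.map_mono _
  have : Epi (L.map (Abelian.image.ι (R.map f)) ≫ adj.counit.app Y) := by
    have : Epi (L.map (Abelian.factorThruImage (R.map f)) ≫
        (L.map (Abelian.image.ι (R.map f)) ≫ adj.counit.app Y)) := by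
      rw [fac]; infer_instance
    exact epi_of_epi (L.map (Abelian.factorThruImage (R.map f))) _
  exact isIso_of_mono_of_epi _

end CategoryTheory.Adjunction

theorem IsLocalizingSubcategory.preimage_obj_of_adjunction {C : Type u'} [Category.{v} C]
    [Abelian D] [Abelian C] [HasCoproducts.{v} D] [HasCoproducts.{v} C] {L : D ⥤ C}
    {R : C ⥤ D} (adj : L ⊣ R) [R.Full] [R.Faithful] [PreservesFiniteLimits L] {S : Set D}
    (hS : IsLocalizingSubcategory S) (hV : ∀ X ∈ S, R.obj (L.obj X) ∈ S) :
    IsLocalizingSubcategory (R.obj ⁻¹' S) := by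
  have : L.IsLeftAdjoint := adj.isLeftAdjoint
  have : R.IsRightAdjoint := adj.isRightAdjoint
  refine ⟨fun e hX => hS.of_iso (R.mapIso e) hX, ?mono, ?epi, ?ext, ?sigma⟩
  case mono =>
    intro X Y f _ hY
    exact hS.of_mono (R.map f) hY
  case epi =>
    intro X Y f _ hX
    have hI : Abelian.image (R.map f) ∈ S := hS.of_epi (Abelian.factorThruImage (R.map f)) hX
    have := adj.isIso_map_imageι_comp_counit f
    exact hS.of_iso (R.mapIso (asIso (L.map (Abelian.image.ι (R.map f)) ≫ adj.counit.app Y)))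
      (hV _ hI)
  case ext =>
    intro T hT h₁ h₃
    have := hT.mono_f
    have : Mono (T.map R).f := R.map_mono T.f
    exact hS.of_exact_of_mono (T := T.map R)
      (hT.exact.map_of_mono_of_preservesKernel R ‹_› inferInstance) h₁ h₃
  case sigma =>
    intro ι Y hY
    exact hS.of_iso (R.mapIso (PreservesCoproduct.iso L _ ≪≫
      Sigma.mapIso fun i => asIso (adj.counit.app (Y i)))) (hV _ (hS.sigma_mem _ hY))

theorem voevodsky_property_implies_localizing_image_general
    {DQ : Type u'} [Category.{v} DQ] [Abelian D] [Abelian DQ]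
    [HasCoproducts.{v} D] [HasCoproducts.{v} DQ]
    (L : D ⥤ DQ) (R : DQ ⥤ D) (adj : L ⊣ R) [R.Full] [R.Faithful]
    [PreservesFiniteLimits L]
    (S : Set D) (hS : IsLocalizingSubcategory S)
    (hV : ∀ X ∈ S, R.obj (L.obj X) ∈ S) :
    IsLocalizingSubcategory {Y : DQ | ∃ X ∈ S, Nonempty (L.obj X ≅ Y)} := by
  have hSQ : {Y : DQ | ∃ X ∈ S, Nonempty (L.obj X ≅ Y)} = R.obj ⁻¹' S :=
    Set.ext (adj.exists_mem_left_obj_iso_iff hS hV)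
  rw [hSQ]
  exact hS.preimage_obj_of_adjunction adj hV

/-- Let `D` be a Grothendieck category and `Q`, `S` two localizing Serre subcategories,
where the quotient `D/Q` is modelled by an exact localization functor `L : D ⥤ DQ` with
fully faithful right adjoint (section) `R`, so that `Q = Ker L` and the `Q`-localization
of `X` is `R(L(X))`. If `S` satisfies the Voevodsky property with respect to `Q`
(the `Q`-localization of every object of `S` lies again in `S`), then the full
subcategory `S^Q = { X_Q | X ∈ S }` of `D/Q` is a localizing Serre subcategory of
`D/Q`: it is closed under isomorphisms, subobjects, quotient objects, extensions and
arbitrary direct sums in `D/Q`. -/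
theorem voevodsky_property_implies_localizing_image
    {DQ : Type u'} [Category.{v} DQ] [Abelian D] [Abelian DQ]
    [HasCoproducts.{v} D] [HasCoproducts.{v} DQ]
    (L : D ⥤ DQ) (R : DQ ⥤ D) (adj : L ⊣ R) [R.Full] [R.Faithful]
    [PreservesFiniteLimits L]
    (S : Set D) (hS : IsLocalizingSubcategory S)
    (Q : Set D) (hQ : Q = {X : D | IsZero (L.obj X)}) (hQloc : IsLocalizingSubcategory Q)
    (hV : ∀ X ∈ S, R.obj (L.obj X) ∈ S) :
    IsLocalizingSubcategory {Y : DQ | ∃ X ∈ S, Nonempty (L.obj X ≅ Y)} :=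
  voevodsky_property_implies_localizing_image_general L R adj S hS hV
end

section
/- Let D be a Grothendieck category and Q, S localizing subcategories. The full subcategory S^Q of D/Q consisting of objects of the form X_Q with X ∈ S is closed under direct sums, subobjects, and quotient objects in D/Q. -/
open CategoryTheory Limits

universe v u u'

variable {D : Type u} [Category.{v} D]

/-!
An object of `S^Q` is `L X` with `X ∈ S`. Since `R` is fully faithful, the counit `L R ⟶ 𝟭` is an
isomorphism and `L` inverts the unit `X ⟶ R (L X)`. Hence a subobject `Y ↪ L X` is `L` of the
pullback of `R Y ↪ R (L X)` along the unit, which is a subobject of `X`, and a quotient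
`L X ↠ Y` is `L` of the image of its transpose `X ⟶ R Y`, which is a quotient of `X`: `L` sends
the inclusion of the image to a mono into `L (R Y) ≅ Y` through which `L X ↠ Y` factors.
Direct sums are preserved by `L`, a left adjoint.
-/

namespace CategoryTheory.ObjectProperty

variable {C : Type*} [Category C] {C' : Type*} [Category C']

lemma prop_map_sigma (P : ObjectProperty C) (F : C ⥤ C') {ι : Type*}
    [HasCoproductsOfShape ι C] [HasCoproductsOfShape ι C']
    [PreservesColimitsOfShape (Discrete ι) F]
    (hP : ∀ X : ι → C, (∀ i, P (X i)) → P (∐ X))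
    (Y : ι → C') (hY : ∀ i, P.map F (Y i)) : P.map F (∐ Y) := by
  choose X hX e using hY
  exact ⟨∐ X, hP X hX, ⟨PreservesCoproduct.iso F X ≪≫ Sigma.mapIso fun i => (e i).some⟩⟩

lemma isClosedUnderSubobjects_map {L : C ⥤ C'} {R : C' ⥤ C} (adj : L ⊣ R) [R.Full] [R.Faithful]
    (P : ObjectProperty C) [P.IsClosedUnderSubobjects]
    [HasPullbacks C] [PreservesLimitsOfShape WalkingCospan L] :
    (P.map L).IsClosedUnderSubobjects where
  prop_of_mono {Y _} f _ := by
    rintro ⟨X, hX, ⟨e⟩⟩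
    have := Functor.preservesMonomorphisms_of_adjunction adj
    let g := R.map (f ≫ e.inv)
    have := hasPullback_of_preservesPullback L (adj.unit.app X) g
    refine ⟨pullback (adj.unit.app X) g, P.prop_of_mono (pullback.fst _ _) hX, ⟨?_⟩⟩
    exact PreservesPullback.iso L _ _ ≪≫
      asIso (pullback.snd (L.map (adj.unit.app X)) (L.map g)) ≪≫ asIso (adj.counit.app Y)

lemma isClosedUnderQuotients_map {L : C ⥤ C'} {R : C' ⥤ C} (adj : L ⊣ R) [R.Full]
    (P : ObjectProperty C) [P.IsClosedUnderQuotients]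
    [HasImages C] [HasEqualizers C] [L.PreservesMonomorphisms] [Balanced C'] :
    (P.map L).IsClosedUnderQuotients where
  prop_of_epi {_ Y} f _ := by
    rintro ⟨X, hX, ⟨e⟩⟩
    let h : X ⟶ R.obj Y := adj.homEquiv _ _ (e.hom ≫ f)
    refine ⟨image h, P.prop_of_epi (factorThruImage h) hX, ⟨?_⟩⟩
    let φ := L.map (image.ι h) ≫ adj.counit.app Y
    have fac : L.map (factorThruImage h) ≫ φ = e.hom ≫ f := by
      rw [← Category.assoc, ← L.map_comp, image.fac]
      exact (adj.homEquiv_counit (g := h)).symm.trans ((adj.homEquiv _ _).symm_apply_apply _)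
    have : Epi (e.hom ≫ f) := epi_comp _ _
    have : Epi φ := epi_of_epi_fac fac
    have : IsIso φ := isIso_of_mono_of_epi φ
    exact asIso φ

end CategoryTheory.ObjectProperty

lemma IsLocalizingSubcategory.isClosedUnderSubobjects [Abelian D] [HasCoproducts.{v} D]
    {P : Set D} (hP : IsLocalizingSubcategory P) :
    ObjectProperty.IsClosedUnderSubobjects (P : ObjectProperty D) :=
  ⟨fun f hf hY => hP.2.1 f hf hY⟩

lemma IsLocalizingSubcategory.isClosedUnderQuotients [Abelian D] [HasCoproducts.{v} D]
    {P : Set D} (hP : IsLocalizingSubcategory P) :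
    ObjectProperty.IsClosedUnderQuotients (P : ObjectProperty D) :=
  ⟨fun f hf hX => hP.2.2.1 f hf hX⟩

theorem localization_image_closed_under_sums_sub_quot_general
    {DQ : Type u'} [Category.{v} DQ] [Abelian D] [Abelian DQ]
    [HasCoproducts.{v} D] [HasCoproducts.{v} DQ]
    (L : D ⥤ DQ) (R : DQ ⥤ D) (adj : L ⊣ R) [R.Full] [R.Faithful]
    [PreservesFiniteLimits L]
    (S : Set D) (hS : IsLocalizingSubcategory S) :
    (∀ (ι : Type v) (f : ι → DQ),
        (∀ i, f i ∈ {Y : DQ | ∃ X ∈ S, Nonempty (L.obj X ≅ Y)}) →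
        (∐ f) ∈ {Y : DQ | ∃ X ∈ S, Nonempty (L.obj X ≅ Y)}) ∧
    (∀ {X Y : DQ} (f : X ⟶ Y), Mono f → Y ∈ {Y : DQ | ∃ X ∈ S, Nonempty (L.obj X ≅ Y)} →
        X ∈ {Y : DQ | ∃ X ∈ S, Nonempty (L.obj X ≅ Y)}) ∧
    (∀ {X Y : DQ} (f : X ⟶ Y), Epi f → X ∈ {Y : DQ | ∃ X ∈ S, Nonempty (L.obj X ≅ Y)} →
        Y ∈ {Y : DQ | ∃ X ∈ S, Nonempty (L.obj X ≅ Y)}) := by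
  have := adj.leftAdjoint_preservesColimits
  have := hS.isClosedUnderSubobjects
  have := hS.isClosedUnderQuotients
  have := ObjectProperty.isClosedUnderSubobjects_map adj (S : ObjectProperty D)
  have := ObjectProperty.isClosedUnderQuotients_map adj (S : ObjectProperty D)
  exact ⟨fun ι => ObjectProperty.prop_map_sigma S L (hS.2.2.2.2 ι),
    fun f _ hY => (ObjectProperty.map S L).prop_of_mono f hY,
    fun f _ hX => (ObjectProperty.map S L).prop_of_epi f hX⟩

/-- Let `D` be a Grothendieck category, `Q` and `S` localizing subcategories, where the
quotient `D/Q` is modelled by an exact localization functor `L : D ⥤ DQ` with fully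
faithful right adjoint (section) `R`, so that `Q = Ker L` and the `Q`-localization of
`X` is `R(L(X))` (equivalently `L(X)` viewed in `D/Q`). Then the full subcategory
`S^Q = { X_Q | X ∈ S }` of `D/Q` is closed under direct sums, subobjects and quotient
objects in `D/Q`. -/
theorem localization_image_closed_under_sums_sub_quot
    {DQ : Type u'} [Category.{v} DQ] [Abelian D] [Abelian DQ]
    [HasCoproducts.{v} D] [HasCoproducts.{v} DQ]
    (L : D ⥤ DQ) (R : DQ ⥤ D) (adj : L ⊣ R) [R.Full] [R.Faithful]
    [PreservesFiniteLimits L]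
    (S : Set D) (hS : IsLocalizingSubcategory S)
    (Q : Set D) (hQ : Q = {X : D | IsZero (L.obj X)}) (hQloc : IsLocalizingSubcategory Q) :
    (∀ (ι : Type v) (f : ι → DQ),
        (∀ i, f i ∈ {Y : DQ | ∃ X ∈ S, Nonempty (L.obj X ≅ Y)}) →
        (∐ f) ∈ {Y : DQ | ∃ X ∈ S, Nonempty (L.obj X ≅ Y)}) ∧
    (∀ {X Y : DQ} (f : X ⟶ Y), Mono f → Y ∈ {Y : DQ | ∃ X ∈ S, Nonempty (L.obj X ≅ Y)} →
        X ∈ {Y : DQ | ∃ X ∈ S, Nonempty (L.obj X ≅ Y)}) ∧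
    (∀ {X Y : DQ} (f : X ⟶ Y), Epi f → X ∈ {Y : DQ | ∃ X ∈ S, Nonempty (L.obj X ≅ Y)} →
        Y ∈ {Y : DQ | ∃ X ∈ S, Nonempty (L.obj X ≅ Y)}) :=
  localization_image_closed_under_sums_sub_quot_general L R adj S hS
end

section
/- Let k be a field and Pre(Cor) the category of presheaves with transfers (additive contravariant functors from finite correspondences to abelian groups). The strict homotopization functor F ↦ [F] := Coker(i₁* − i₀* : F(−×𝔸¹) → F) is left adjoint to the inclusion of the full subcategory of homotopy invariant presheaves with transfers into Pre(Cor). -/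
/-!
On a homotopy invariant `G` the map `p*` is invertible, so all sections of `p` induce the same
map `(p*)⁻¹`; hence `i₁* − i₀*` vanishes on `G`, and by naturality every `F ⟶ G` kills
`i₁* − i₀*` on `F`, i.e. factors uniquely through `[F]`. As `[F]` is itself homotopy invariant,
the resulting bijection `([F] ⟶ G) ≃ (F ⟶ G)`, natural in `G`, determines a left adjoint
`F ↦ [F]` of the inclusion.
-/

open CategoryTheory Limits

universe v u

variable {C : Type u} [Category.{v} C] [Preadditive C]

/-- Abstract interval data on a category of correspondences `C`: the endofunctor
`X ↦ X × 𝔸¹` together with the projection `p` and the zero and one sections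
`i₀, i₁`, which split `p`. -/
structure IntervalData (C : Type u) [Category.{v} C] where
  A : C ⥤ C
  p : A ⟶ 𝟭 C
  i₀ : 𝟭 C ⟶ A
  i₁ : 𝟭 C ⟶ A
  i₀_p : i₀ ≫ p = 𝟙 (𝟭 C)
  i₁_p : i₁ ≫ p = 𝟙 (𝟭 C)

variable (I : IntervalData C)

/-- The natural transformation `i₁* − i₀* : F(−×𝔸¹) ⟶ F` whose cokernel is the
strict homotopization `[F]`. -/
@[simps]
def sectionsDifference (F : Cᵒᵖ ⥤ AddCommGrpCat) : I.A.op ⋙ F ⟶ F where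
  app X := F.map (I.i₁.app X.unop).op - F.map (I.i₀.app X.unop).op
  naturality X Y f := by
    dsimp
    simp only [Preadditive.comp_sub, Preadditive.sub_comp, ← F.map_comp, ← op_comp]
    rw [← NatTrans.naturality, ← NatTrans.naturality]
    rw [← Quiver.Hom.op_unop f, ← op_comp, ← op_comp]
    simp

/-- A presheaf (with transfers) `F` is homotopy invariant if
`pr* : F(X) → F(X×𝔸¹)` is an isomorphism for all `X`. -/
def HomotopyInvariant : Set (Cᵒᵖ ⥤ AddCommGrpCat) :=
  {F | ∀ X : C, IsIso (F.map (I.p.app X).op)}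

@[simps]
noncomputable def cokernelHomEquiv {D : Type*} [Category D] [HasZeroMorphisms D] {X Y Z : D}
    (f : X ⟶ Y) [HasCokernel f] (hf : ∀ g : Y ⟶ Z, f ≫ g = 0) : (cokernel f ⟶ Z) ≃ (Y ⟶ Z) where
  toFun ψ := cokernel.π f ≫ ψ
  invFun g := cokernel.desc f g (hf g)
  left_inv ψ := by ext; simp
  right_inv g := by simp

omit [Preadditive C] in
theorem sectionsDifference_naturality {F G : Cᵒᵖ ⥤ AddCommGrpCat} (φ : F ⟶ G) :
    sectionsDifference I F ≫ φ = Functor.whiskerLeft I.A.op φ ≫ sectionsDifference I G := by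
  ext X : 2
  simp

omit [Preadditive C] in
theorem map_section_eq_of_mem {G : Cᵒᵖ ⥤ AddCommGrpCat} (hG : G ∈ HomotopyInvariant I)
    {i j : 𝟭 C ⟶ I.A} (hi : i ≫ I.p = 𝟙 _) (hj : j ≫ I.p = 𝟙 _) (X : C) :
    G.map (i.app X).op = G.map (j.app X).op := by
  have := hG X
  rw [← cancel_epi (G.map (I.p.app X).op), ← G.map_comp, ← G.map_comp, ← op_comp, ← op_comp,
    ← NatTrans.comp_app, ← NatTrans.comp_app, hi, hj]

omit [Preadditive C] in
theorem sectionsDifference_eq_zero_of_mem {G : Cᵒᵖ ⥤ AddCommGrpCat}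
    (hG : G ∈ HomotopyInvariant I) : sectionsDifference I G = 0 := by
  ext X : 2
  simp [map_section_eq_of_mem I hG I.i₁_p I.i₀_p]

omit [Preadditive C] in
theorem sectionsDifference_comp_eq_zero_of_mem {F G : Cᵒᵖ ⥤ AddCommGrpCat}
    (hG : G ∈ HomotopyInvariant I) (φ : F ⟶ G) : sectionsDifference I F ≫ φ = 0 := by
  rw [sectionsDifference_naturality, sectionsDifference_eq_zero_of_mem I hG, comp_zero]

/-- The strict homotopization functor `F ↦ [F] = Coker(i₁* − i₀* : F(−×𝔸¹) → F)` is
left adjoint to the inclusion of the full subcategory of homotopy invariant presheaves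
with transfers into `Pre(Cor)`. (The hypothesis `hkey` is Voevodsky's key fact that
`[F]` is homotopy invariant, being the zeroth homology of the Suslin complex.) -/
theorem strict_homotopization_left_adjoint
    (hkey : ∀ F : Cᵒᵖ ⥤ AddCommGrpCat,
      cokernel (sectionsDifference I F) ∈ HomotopyInvariant I) :
    ∃ (L : (Cᵒᵖ ⥤ AddCommGrpCat) ⥤ ObjectProperty.FullSubcategory (fun F => F ∈ HomotopyInvariant I))
      (_ : L ⊣ ObjectProperty.ι (fun F => F ∈ HomotopyInvariant I)),
      ∀ F : Cᵒᵖ ⥤ AddCommGrpCat,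
        Nonempty ((ObjectProperty.ι (fun F => F ∈ HomotopyInvariant I)).obj (L.obj F) ≅
          cokernel (sectionsDifference I F)) := by
  let P : ObjectProperty (Cᵒᵖ ⥤ AddCommGrpCat) := fun F => F ∈ HomotopyInvariant I
  let e (F : Cᵒᵖ ⥤ AddCommGrpCat) (G : P.FullSubcategory) :
      (⟨cokernel (sectionsDifference I F), hkey F⟩ ⟶ G) ≃ (F ⟶ P.ι.obj G) :=
    P.fullyFaithfulι.homEquiv.trans
      (cokernelHomEquiv _ (sectionsDifference_comp_eq_zero_of_mem I G.property))
  have he : ∀ F G G' (g : G ⟶ G') h, e F G' (h ≫ g) = e F G h ≫ P.ι.map g := by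
    intro F G G' g h
    simp [e, Functor.FullyFaithful.homEquiv]
  exact ⟨Adjunction.leftAdjointOfEquiv e he, Adjunction.adjunctionOfEquivLeft e he,
    fun F => ⟨Iso.refl _⟩⟩
end

section
/- The quotient of the Grothendieck category of presheaves with transfers PwT/k by the localizing subcategory Q of Nisnevich-locally-trivial presheaves with transfers equals (as the full subcategory of Q-local objects) the category SwT/k of Nisnevich sheaves with transfers; i.e., a presheaf with transfers is Q-local if and only if it is a Nisnevich sheaf. -/
open CategoryTheory Limits

universe v u u'

variable {D : Type u} [Category.{v} D]

/-- An object `X` is `P`-local if `Hom(W, X) = 0` for all `W ∈ P` and `Ext¹(W, X) = 0`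
for all `W ∈ P`, the latter being expressed by the splitting of every short exact
sequence `0 → X → M → W → 0` with `W ∈ P`. -/
def IsLocalObject [Abelian D] (P : Set D) (X : D) : Prop :=
  (∀ W ∈ P, ∀ f : W ⟶ X, f = 0) ∧
  (∀ W ∈ P, ∀ (M : D) (f : X ⟶ M) (g : M ⟶ W) (w : f ≫ g = 0),
    (ShortComplex.mk f g w).ShortExact → ∃ s : M ⟶ X, f ≫ s = 𝟙 X)

/-- Let `D = PwT/k` be the Grothendieck category of presheaves with transfers, modelled
abstractly: `a : D ⥤ Sh` is the exact Nisnevich sheafification functor, left adjoint to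
the fully faithful inclusion `ι : Sh ⥤ D` of the category `Sh = SwT/k` of Nisnevich
sheaves with transfers, and `Q = Ker a` is the localizing subcategory of Nisnevich
locally trivial presheaves with transfers. Then a presheaf with transfers is `Q`-local
if and only if it is a Nisnevich sheaf with transfers, i.e. the quotient `(PwT/k)/Q`,
realized as the full subcategory of `Q`-local objects, equals `SwT/k`. -/
theorem qlocal_iff_sheaf
    {Sh : Type u'} [Category.{v} Sh] [Abelian D] [Abelian Sh]
    (a : D ⥤ Sh) (ι : Sh ⥤ D) (adj : a ⊣ ι) [ι.Full] [ι.Faithful]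
    [PreservesFiniteLimits a] :
    ∀ F : D, IsLocalObject {X : D | IsZero (a.obj X)} F ↔ ι.essImage F := by
  haveI : a.IsLeftAdjoint := ⟨ι, ⟨adj⟩⟩
  haveI : PreservesColimitsOfSize.{0, 0} a := adj.leftAdjoint_preservesColimits
  haveI : PreservesFiniteColimits a := ⟨fun _ _ _ => inferInstance⟩
  -- any morphism from an object of `Q` to an object of the image of `ι` vanishes
  have key : ∀ (W : D), IsZero (a.obj W) → ∀ (G : Sh) (f : W ⟶ ι.obj G), f = 0 := by
    intro W hW G f
    have hf : f = adj.homEquiv W G ((adj.homEquiv W G).symm f) :=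
      (Equiv.apply_symm_apply _ _).symm
    rw [hf, Adjunction.homEquiv_unit, hW.eq_of_src ((adj.homEquiv W G).symm f) 0,
      ι.map_zero, comp_zero]
  intro F
  constructor
  · rintro ⟨h1, h2⟩
    set η := adj.unit.app F with hη
    haveI : IsIso (a.map η) := by rw [hη]; infer_instance
    -- the kernel of the unit lies in `Q`
    have hK : IsZero (a.obj (kernel η)) :=
      IsZero.of_iso (isZero_zero Sh) (PreservesKernel.iso a η ≪≫ kernel.ofMono (a.map η))
    have hKι : kernel.ι η = 0 := h1 _ hK _
    haveI : Mono η := Abelian.mono_of_kernel_ι_eq_zero η hKι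
    -- the cokernel of the unit lies in `Q`
    have hC : IsZero (a.obj (cokernel η)) :=
      IsZero.of_iso (isZero_zero Sh) (PreservesCokernel.iso a η ≪≫ cokernel.ofEpi (a.map η))
    have hse : (ShortComplex.mk η (cokernel.π η) (cokernel.condition η)).ShortExact :=
      { exact := ShortComplex.exact_of_g_is_cokernel _ (cokernelIsCokernel η) }
    obtain ⟨s, hs⟩ := h2 _ hC _ η (cokernel.π η) (cokernel.condition η) hse
    have hzero : η ≫ (s ≫ η - 𝟙 _) = 0 := by
      rw [Preadditive.comp_sub, ← Category.assoc, hs]; simp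
    have hdesc : s ≫ η - 𝟙 _ = cokernel.π η ≫ cokernel.desc η (s ≫ η - 𝟙 _) hzero :=
      (cokernel.π_desc _ _ _).symm
    have ht : cokernel.desc η (s ≫ η - 𝟙 _) hzero = 0 := key _ hC _ _
    have hs' : s ≫ η = 𝟙 _ := by
      have := hdesc
      rw [ht, comp_zero, sub_eq_zero] at this
      exact this
    haveI : IsIso η := ⟨s, hs, hs'⟩
    exact adj.mem_essImage_of_unit_isIso F
  · intro hF
    haveI : IsIso (adj.unit.app F) := (adj.isIso_unit_app_iff_mem_essImage).2 hF
    constructor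
    · intro W hW f
      have h2 : f ≫ adj.unit.app F = 0 := key W hW (a.obj F) (f ≫ adj.unit.app F)
      exact (cancel_mono (adj.unit.app F)).1 (by rw [h2, zero_comp])
    · intro W hW M f g w hse
      have hmap : ((ShortComplex.mk f g w).map a).ShortExact := hse.map_of_exact a
      haveI hiso : IsIso (a.map f) := hmap.isIso_f_iff.2 hW
      refine ⟨adj.unit.app M ≫ ι.map (inv (a.map f)) ≫ inv (adj.unit.app F), ?_⟩
      have hnat : f ≫ adj.unit.app M = adj.unit.app F ≫ ι.map (a.map f) := by
        simp
      rw [← Category.assoc, hnat, Category.assoc, ← Category.assoc (ι.map (a.map f)),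
        ← ι.map_comp, IsIso.hom_inv_id, ι.map_id, Category.id_comp, IsIso.hom_inv_id]
end
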